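/- arXiv:2106.15500 — 5 statements merged into one kernel-verified Lean document; each statement's English description precedes it below -/
import Mathlib

section
/- Let Γ be a simplicial graph and let u be a vertex of Γ. Then Γ is fine at u if and only if for every integer k > 0 and every vertex v of Γ, the set uv→(k)_Γ is finite. -/
open SimpleGraph
/-- The graph `Γ` with the vertex `v` deleted (kept as an isolated vertex). -/
def deleteVert {V : Type*} (Γ : SimpleGraph V) (v : V) : SimpleGraph V where
  Adj x y := Γ.Adj x y ∧ x ≠ v ∧ y ≠ v
  symm := ⟨fun x y ⟨h, hx, hy⟩ => ⟨h.symm, hy, hx⟩⟩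
  loopless := ⟨fun x ⟨h, _, _⟩ => Γ.loopless.irrefl x h⟩

/-- The angle metric `∠_v(x,y)`: length of a shortest path from `x` to `y` in `Γ - v`,
with value `∞` if there is no such path. -/
noncomputable def angle {V : Type*} (Γ : SimpleGraph V) (v x y : V) : ℕ∞ :=
  (deleteVert Γ v).edist x y

/-- `Γ` is fine at `v`: every ball of finite radius in `(T_vΓ, ∠_v)` is finite. -/
def FineAt {V : Type*} (Γ : SimpleGraph V) (v : V) : Prop :=
  ∀ x ∈ Γ.neighborSet v, ∀ n : ℕ,
    {y ∈ Γ.neighborSet v | angle Γ v x y ≤ (n : ℕ∞)}.Finite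

/-- The set `uv→(k)_Γ` of vertices `w` adjacent to `u` that belong to some escaping path
from `u` to `v` of length at most `k`.  An escaping path from `u` to `v` is an edge-path
`[u, u₁, …, uₙ]` with `v = uᵢ` for some `i ≥ 1` and `uᵢ ≠ u` for all `i ≥ 1`. -/
def escSet {V : Type*} (Γ : SimpleGraph V) (u v : V) (k : ℕ) : Set V :=
  {w | w ∈ Γ.neighborSet u ∧ ∃ (x : V) (p : Γ.Walk u x),
      p.length ≤ k ∧ v ∈ p.support.tail ∧ u ∉ p.support.tail ∧ w ∈ p.support}

/-!
An escaping path of length at most `k` through `w` leaves `u` along an edge `u a` and then stays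
in `Γ - u`, so `∠_u(a, v) ≤ k` and `∠_u(a, w) ≤ k`. By the triangle inequality, `uv→(k)` lies in
the `∠_u`-ball of radius `3k` about any one such `a`. Conversely, prefixing a geodesic of `Γ - u`
from `x ∈ T_uΓ` with the edge `u x` shows that the `∠_u`-ball of radius `n` about `x` lies in
`ux→(n+1)`.
-/

section

variable {V : Type*} {Γ : SimpleGraph V} {u : V}

lemma deleteVert_le : deleteVert Γ u ≤ Γ := fun _ _ h => h.1

lemma notMem_support_of_walk_deleteVert {a b : V} (q : (deleteVert Γ u).Walk a b)
    (ha : a ≠ u) : u ∉ q.support := by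
  induction q with
  | nil => simpa using ha.symm
  | cons h _ ih =>
    rw [Walk.support_cons, List.mem_cons, not_or]
    exact ⟨h.2.1.symm, ih h.2.2⟩

lemma angle_le_length {a b : V} (p : Γ.Walk a b) (hu : u ∉ p.support) :
    angle Γ u a b ≤ p.length := by
  have hedges : ∀ e ∈ p.edges, e ∈ (deleteVert Γ u).edgeSet := by
    rintro ⟨x, y⟩ he
    exact ⟨p.adj_of_mem_edges he, fun h => hu (h ▸ p.fst_mem_support_of_mem_edges he),
      fun h => hu (h ▸ p.snd_mem_support_of_mem_edges he)⟩
  simpa [angle] using edist_le (p.transfer _ hedges)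

lemma angle_le_length_of_mem_support {a b w : V} (p : Γ.Walk a b) (hu : u ∉ p.support)
    (hw : w ∈ p.support) : angle Γ u a w ≤ p.length := by
  classical
  exact (angle_le_length _ fun h => hu (p.support_takeUntil_subset_support hw h)).trans
    (by exact_mod_cast p.length_takeUntil_le_length hw)

lemma exists_adj_angle_le_of_mem_escSet {v w : V} {k : ℕ} (hw : w ∈ escSet Γ u v k) :
    ∃ a, Γ.Adj u a ∧ angle Γ u a v ≤ k ∧ angle Γ u a w ≤ k := by
  obtain ⟨hwu, x, p, hlen, hv, hu, hwp⟩ := hw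
  cases p with
  | nil => simp at hv
  | cons hua q =>
    rw [Walk.support_cons, List.tail_cons] at hv hu
    rw [Walk.support_cons, List.mem_cons] at hwp
    have hwq : w ∈ q.support := hwp.resolve_left (Γ.ne_of_adj hwu).symm
    have hq : (q.length : ℕ∞) ≤ k := by
      rw [Walk.length_cons] at hlen
      exact_mod_cast (Nat.le_succ _).trans hlen
    exact ⟨_, hua, (angle_le_length_of_mem_support q hu hv).trans hq,
      (angle_le_length_of_mem_support q hu hwq).trans hq⟩

lemma escSet_subset_angle_ball {a v : V} {k : ℕ} (hav : angle Γ u a v ≤ k) :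
    escSet Γ u v k ⊆ {y ∈ Γ.neighborSet u | angle Γ u a y ≤ (3 * k : ℕ)} := by
  intro w hw
  obtain ⟨b, -, hbv, hbw⟩ := exists_adj_angle_le_of_mem_escSet hw
  refine ⟨hw.1, ?_⟩
  rw [angle, SimpleGraph.edist_comm] at hbv
  calc angle Γ u a w ≤ angle Γ u a v + (angle Γ u v b + angle Γ u b w) :=
        SimpleGraph.edist_triangle.trans (add_le_add le_rfl SimpleGraph.edist_triangle)
    _ ≤ k + (k + k) := add_le_add hav (add_le_add hbv hbw)
    _ = (3 * k : ℕ) := by push_cast; ring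

lemma angle_ball_subset_escSet {x : V} (hx : Γ.Adj u x) (n : ℕ) :
    {y ∈ Γ.neighborSet u | angle Γ u x y ≤ n} ⊆ escSet Γ u x (n + 1) := by
  rintro y ⟨hy, hxy⟩
  obtain ⟨q, hq⟩ := exists_walk_of_edist_ne_top (ne_top_of_le_ne_top (ENat.natCast_ne_top n) hxy)
  have hqn : q.length ≤ n := by
    unfold angle at hxy
    exact_mod_cast hq ▸ hxy
  refine ⟨hy, y, .cons hx (q.mapLe deleteVert_le), ?_, ?_, ?_, Walk.end_mem_support _⟩
  · simpa using hqn
  · simp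
  · simpa [Walk.support_mapLe_eq_support] using
      notMem_support_of_walk_deleteVert q (Γ.ne_of_adj hx).symm

end

theorem statement0 {V : Type*} (Γ : SimpleGraph V) (u : V) :
    FineAt Γ u ↔ ∀ k : ℕ, 0 < k → ∀ v : V, (escSet Γ u v k).Finite := by
  constructor
  · intro hfine k _ v
    rcases (escSet Γ u v k).eq_empty_or_nonempty with hempty | ⟨w, hw⟩
    · simp [hempty]
    obtain ⟨a, hua, hav, -⟩ := exists_adj_angle_le_of_mem_escSet hw
    exact (hfine a hua (3 * k)).subset (escSet_subset_angle_ball hav)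
  · intro hesc x hx n
    exact (hesc (n + 1) n.succ_pos x).subset (angle_ball_subset_escSet hx n)
end

section
/- Let Γ be a simplicial graph, let u, v be vertices of Γ, let k > 0 be an integer, and let w ∈ uv→(k)_Γ. Then every element z of uv→(k)_Γ satisfies ∠_u(w,z) ≤ 2k − 2; that is, uv→(k)_Γ is contained in the closed ball of radius 2k − 2 centered at w in (T_uΓ, ∠_u). -/
/-!
Dropping the initial vertex `u` from an escaping path from `u` to `v` of length at most `k`
leaves a walk of length at most `k - 1` in `Γ - u` through `v` and through the chosen
neighbour of `u`. Hence every element of `uv→(k)_Γ` lies within angle `k - 1` of `v`, and the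
triangle inequality for `∠_u` gives the bound `2k - 2`.
-/

open SimpleGraph
namespace SimpleGraph.Walk

variable {V : Type*} {G : SimpleGraph V}

theorem edist_le_length_of_mem_support {s x a b : V} (p : G.Walk s x)
    (ha : a ∈ p.support) (hb : b ∈ p.support) : G.edist a b ≤ p.length := by
  induction p generalizing a b with
  | nil =>
    rw [support_nil, List.mem_singleton] at ha hb
    simp [ha, hb]
  | @cons s t x h q ih =>
    have hq_start : ∀ c ∈ q.support, G.edist s c ≤ (q.cons h).length := fun c hc =>
      calc G.edist s c ≤ G.edist s t + G.edist t c := SimpleGraph.edist_triangle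
        _ ≤ 1 + q.length := add_le_add (edist_eq_one_iff_adj.mpr h).le (ih q.start_mem_support hc)
        _ = (q.cons h).length := by rw [length_cons]; push_cast; ring
    rw [support_cons, List.mem_cons] at ha hb
    rcases ha with rfl | ha <;> rcases hb with rfl | hb
    · simp
    · exact hq_start _ hb
    · exact edist_comm (G := G) ▸ hq_start _ ha
    · exact (ih ha hb).trans (by simp)

end SimpleGraph.Walk

section

variable {V : Type*} {Γ : SimpleGraph V}

theorem edist_deleteVert_le_of_mem_support {u s x a b : V} (p : Γ.Walk s x)
    (hu : u ∉ p.support) (ha : a ∈ p.support) (hb : b ∈ p.support) :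
    (deleteVert Γ u).edist a b ≤ p.length := by
  have hedges : ∀ e ∈ p.edges, e ∈ (deleteVert Γ u).edgeSet := by
    intro e he
    induction e using Sym2.ind with
    | _ c d =>
      refine ⟨p.adj_of_mem_edges he, ?_, ?_⟩
      · rintro rfl; exact hu (p.fst_mem_support_of_mem_edges he)
      · rintro rfl; exact hu (p.snd_mem_support_of_mem_edges he)
  rw [← p.length_transfer hedges]
  exact (p.transfer _ hedges).edist_le_length_of_mem_support
    (by rwa [Walk.support_transfer]) (by rwa [Walk.support_transfer])

theorem edist_deleteVert_le_of_mem_escSet {u v w : V} {k : ℕ} (hw : w ∈ escSet Γ u v k) :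
    (deleteVert Γ u).edist w v ≤ ((k - 1 : ℕ) : ℕ∞) := by
  obtain ⟨hadj, x, p, hlen, hv, hu, hwp⟩ := hw
  cases p with
  | nil => simp at hv
  | cons h q =>
    rw [Walk.support_cons, List.tail_cons] at hv hu
    rw [Walk.support_cons, List.mem_cons] at hwp
    have hwq : w ∈ q.support := hwp.resolve_left (Γ.ne_of_adj hadj).symm
    rw [Walk.length_cons] at hlen
    exact (edist_deleteVert_le_of_mem_support q hu hwq hv).trans 
      (by exact_mod_cast (show q.length ≤ k - 1 by omega))

end

theorem statement1_general {V : Type*} (Γ : SimpleGraph V) (u v : V) (k : ℕ)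
    (w : V) (hw : w ∈ escSet Γ u v k) :
    ∀ z ∈ escSet Γ u v k, angle Γ u w z ≤ ((2 * k - 2 : ℕ) : ℕ∞) := by
  intro z hz
  calc angle Γ u w z ≤ (deleteVert Γ u).edist w v + (deleteVert Γ u).edist v z :=
        SimpleGraph.edist_triangle
    _ ≤ ((k - 1 : ℕ) : ℕ∞) + ((k - 1 : ℕ) : ℕ∞) :=
        add_le_add (edist_deleteVert_le_of_mem_escSet hw)
          (edist_comm (G := deleteVert Γ u) ▸ edist_deleteVert_le_of_mem_escSet hz)
    _ = ((2 * k - 2 : ℕ) : ℕ∞) := by norm_cast; omega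

theorem statement1 {V : Type*} (Γ : SimpleGraph V) (u v : V) (k : ℕ) (hk : 0 < k)
    (w : V) (hw : w ∈ escSet Γ u v k) :
    ∀ z ∈ escSet Γ u v k, angle Γ u w z ≤ ((2 * k - 2 : ℕ) : ℕ∞) :=
  statement1_general Γ u v k w hw
end

section
/- Let Γ be a connected G-graph with finite edge stabilizers, let u, v be distinct vertices of Γ with {u,v} ∉ E(Γ), and let Γ' be the G-graph obtained from Γ by attaching the G-orbit of edges with representative {u,v}. If a is a vertex such that Γ is fine at a, then Γ' is fine at a. -/
open SimpleGraph
/-- The `G`-graph obtained from `Γ` by attaching the `G`-orbit of edges with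
representative `{u,v}`. -/
def attachOrbit {V : Type*} (Γ : SimpleGraph V) (G : Type*) [Group G] [MulAction G V]
    (u v : V) (huv : u ≠ v) : SimpleGraph V where
  Adj x y := Γ.Adj x y ∨ ∃ g : G, (g • u = x ∧ g • v = y) ∨ (g • v = x ∧ g • u = y)
  symm := by
    constructor
    rintro x y (h | ⟨g, hg⟩)
    · exact Or.inl h.symm
    · refine Or.inr ⟨g, ?_⟩
      rcases hg with ⟨h1, h2⟩ | ⟨h1, h2⟩
      · exact Or.inr ⟨h2, h1⟩
      · exact Or.inl ⟨h2, h1⟩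
  loopless := by
    constructor
    rintro x (h | ⟨g, ⟨h1, h2⟩ | ⟨h1, h2⟩⟩)
    · exact Γ.loopless.irrefl x h
    · exact huv (smul_left_cancel g (h1.trans h2.symm))
    · exact huv (smul_left_cancel g (h2.trans h1.symm))


/-!
Fix a path `γ` in `Γ` from `u` to `v`, of length `L`. A new edge `{g u, g v}` is shadowed by the
translate `g γ`. If `g γ` avoids `a`, the new edge can be replaced by a path of length `L` in
`Γ - a`. Otherwise `g γ` enters and leaves `a` through edges `{q, a}` and `{p, a}`; as edge
stabilizers are finite, each `q` is paired in this way with only finitely many `p`. So distances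
in `Γ' - a` are at most `2L + 1` times distances in `Γ - a` with the pairs `{q, p}` added as edges,
and fineness at `a` survives adding finitely many such edges at each neighbour of `a`. A new
neighbour `g v` of `a = g u` lies within `L` of a `Γ`-neighbour `q` of `a` on `g γ`, and only
finitely many new neighbours arise from each `q`.
-/

namespace SimpleGraph

variable {V : Type*} {Γ Δ : SimpleGraph V}

theorem Walk.edist_le_mul_length {C : ℕ} (h : ∀ x y, Δ.Adj x y → Γ.edist x y ≤ C) {x y : V}
    (p : Δ.Walk x y) : Γ.edist x y ≤ (C * p.length : ℕ) := by
  induction p with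
  | nil => simp
  | @cons x z y hxz p ih =>
    calc Γ.edist x y ≤ Γ.edist x z + Γ.edist z y := Γ.edist_triangle
      _ ≤ C + (C * p.length : ℕ) := add_le_add (h x z hxz) ih
      _ = (C * (p.cons hxz).length : ℕ) := by push_cast [Walk.length_cons]; ring

theorem finite_setOf_edist_le (h : ∀ v, (Γ.neighborSet v).Finite) (x : V) (n : ℕ) :
    {y | Γ.edist x y ≤ n}.Finite := by
  induction n generalizing x with
  | zero => simp
  | succ n ih =>
    refine (((h x).biUnion fun z _ => ih z).insert x).subset
      fun y (hy : Γ.edist x y ≤ (n + 1 : ℕ)) => ?_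
    obtain ⟨p, hp⟩ := exists_walk_of_edist_ne_top (ne_top_of_le_ne_top (by simp) hy)
    cases p with
    | nil => exact Set.mem_insert _ _
    | cons hxz p =>
      refine Set.mem_insert_of_mem _ (Set.mem_biUnion hxz ?_)
      rw [← hp, Walk.length_cons, Nat.cast_le] at hy
      exact (edist_le p).trans (by exact_mod_cast Nat.le_of_succ_le_succ hy)

theorem Walk.edist_deleteVert_le_length {a s t : V} (p : Γ.Walk s t) (ha : a ∉ p.support) :
    (deleteVert Γ a).edist s t ≤ p.length := by
  have hp : ∀ e ∈ p.edges, e ∈ (deleteVert Γ a).edgeSet := by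
    intro e he
    induction e using Sym2.ind with
    | _ x y =>
      exact ⟨p.adj_of_mem_edges he, fun h => ha (h ▸ p.fst_mem_support_of_mem_edges he),
        fun h => ha (h ▸ p.snd_mem_support_of_mem_edges he)⟩
  simpa using edist_le (p.transfer _ hp)

theorem Walk.exists_mem_edges_edist_deleteVert_le {a s t : V} (p : Γ.Walk s t)
    (ha : a ∈ p.support) (hs : s ≠ a) :
    ∃ q, s(q, a) ∈ p.edges ∧ (deleteVert Γ a).edist s q ≤ p.length := by
  induction p with
  | nil => exact absurd (by simpa using ha) hs.symm
  | @cons s c t hsc p ih =>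
    by_cases hc : c = a
    · subst hc
      exact ⟨s, by simp, by simp⟩
    obtain ⟨q, hq, hcq⟩ := ih (by simpa [Ne.symm hs] using ha) hc
    refine ⟨q, by simp [hq], ?_⟩
    calc (deleteVert Γ a).edist s q ≤ (deleteVert Γ a).edist s c + (deleteVert Γ a).edist c q :=
          SimpleGraph.edist_triangle
      _ ≤ 1 + p.length := add_le_add (edist_le_one_iff_adj_or_eq.2 (.inl ⟨hsc, hs, hc⟩)) hcq
      _ = (p.cons hsc).length := by push_cast [Walk.length_cons]; ring

end SimpleGraph

theorem FineAt.finite_setOf_edist_sup_fromRel {V : Type*} {Γ : SimpleGraph V} {a : V}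
    (hfine : FineAt Γ a) {R : V → V → Prop} (hRsymm : ∀ q p, R q p → R p q)
    (hRadj : ∀ q p, R q p → Γ.Adj a q ∧ Γ.Adj a p) (hRfin : ∀ q, {p | R q p}.Finite)
    {x : V} (hx : Γ.Adj a x) (n : ℕ) :
    {y | Γ.Adj a y ∧ (deleteVert Γ a ⊔ fromRel R).edist x y ≤ n}.Finite := by
  set M := fromRel fun q p => Γ.Adj a q ∧ Γ.Adj a p ∧ (angle Γ a q p ≤ n ∨ R q p)
  have hM : ∀ q p, Γ.Adj a q → Γ.Adj a p → (angle Γ a q p ≤ n ∨ R q p) → M.edist q p ≤ 1 := by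
    intro q p hq hp hqp
    refine edist_le_one_iff_adj_or_eq.2 (or_iff_not_imp_right.2 fun hne => ?_)
    exact ⟨hne, .inl ⟨hq, hp, hqp⟩⟩
  have hMfin : ∀ q, (M.neighborSet q).Finite := by
    intro q
    by_cases hq : Γ.Adj a q
    · refine ((hfine q hq n).union (hRfin q)).subset ?_
      rintro p ⟨-, ⟨-, hp, hqp | hqp⟩ | ⟨hp, -, hpq | hpq⟩⟩
      · exact .inl ⟨hp, hqp⟩
      · exact .inr hqp
      · exact .inl ⟨hp, by rwa [angle, SimpleGraph.edist_comm]⟩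
      · exact .inr (hRsymm _ _ hpq)
    · refine Set.finite_empty.subset ?_
      rintro p ⟨-, ⟨hq', -⟩ | ⟨-, hq', -⟩⟩ <;> exact hq hq'
  -- The neighbours of `a` met along a walk in `Γ - a ⊔ R` form a walk in `M`, at most twice
  -- as long: each `R`-edge costs one `M`-step, plus one for the `Γ - a` stretch before it.
  have key : ∀ {c y : V} (w : (deleteVert Γ a ⊔ fromRel R).Walk c y), Γ.Adj a y →
      ∀ r (k : ℕ), Γ.Adj a r → angle Γ a r c ≤ k → k + w.length ≤ n →
      M.edist r y ≤ (2 * w.length + 1 : ℕ) := by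
    intro c y w hy
    induction w with
    | nil =>
      intro r k hr hrc hk
      rw [Walk.length_nil] at hk ⊢
      exact (hM r _ hr hy (.inl (hrc.trans (by exact_mod_cast hk)))).trans (by simp)
    | @cons c c' y hcc' w ih =>
      intro r k hr hrc hk
      rw [Walk.length_cons] at hk ⊢
      rcases hcc' with hcc' | ⟨-, hcc'⟩
      · refine (ih hy r (k + 1) hr ?_ (by omega)).trans (by gcongr; omega)
        calc angle Γ a r c' ≤ angle Γ a r c + angle Γ a c c' := SimpleGraph.edist_triangle
          _ ≤ k + 1 := add_le_add hrc (edist_le_one_iff_adj_or_eq.2 (.inl hcc'))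
          _ = (k + 1 : ℕ) := by push_cast; rfl
      replace hcc' : R c c' := hcc'.elim id (hRsymm _ _)
      obtain ⟨hc, hc'⟩ := hRadj _ _ hcc'
      calc M.edist r y ≤ M.edist r c + M.edist c c' + M.edist c' y :=
            SimpleGraph.edist_triangle.trans (add_le_add_left SimpleGraph.edist_triangle _)
        _ ≤ 1 + 1 + (2 * w.length + 1 : ℕ) := by
          gcongr
          · exact hM r c hr hc (.inl (hrc.trans (by exact_mod_cast (by omega : k ≤ n))))
          · exact hM c c' hc hc' (.inr hcc')
          · exact ih hy c' 0 hc' (by simp [angle]) (by simpa using hk.trans' (by omega))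
        _ = (2 * (w.length + 1) + 1 : ℕ) := by push_cast; ring
  refine (finite_setOf_edist_le hMfin x (2 * n + 1)).subset fun y ⟨hy, hxy⟩ => ?_
  obtain ⟨w, hw⟩ := exists_walk_of_edist_ne_top (ne_top_of_le_ne_top (by simp) hxy)
  have hwn : w.length ≤ n := by exact_mod_cast hw ▸ hxy
  exact (key w hy x 0 hx (by simp [angle]) (by simpa using hwn)).trans (by gcongr)

section GroupAction

variable {V : Type*} (G : Type*) [Group G] [MulAction G V] (Γ : SimpleGraph V)

def PreservesAdj : Prop :=
  ∀ (g : G) (x y : V), Γ.Adj x y → Γ.Adj (g • x) (g • y)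

def FiniteEdgeStabilizers : Prop :=
  ∀ x y : V, Γ.Adj x y →
    ({g : G | (g • x = x ∧ g • y = y) ∨ (g • x = y ∧ g • y = x)} : Set G).Finite

variable {u v : V} {Γ}

def OnCommonTranslate (γ : Γ.Walk u v) (a q p : V) : Prop :=
  ∃ g : G, s(q, a) ∈ γ.edges.map (Sym2.map (g • ·)) ∧ s(p, a) ∈ γ.edges.map (Sym2.map (g • ·))

def translateEnds (γ : Γ.Walk u v) (a q : V) : Set V :=
  {y | ∃ g : G, s(q, a) ∈ γ.edges.map (Sym2.map (g • ·)) ∧ (g • u = y ∨ g • v = y)}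

variable {G}

def SimpleGraph.Walk.translate (hact : PreservesAdj G Γ) (g : G) (γ : Γ.Walk u v) :
    Γ.Walk (g • u) (g • v) :=
  γ.map ⟨(g • ·), hact g _ _⟩

theorem SimpleGraph.Walk.edges_translate (hact : PreservesAdj G Γ) (g : G) (γ : Γ.Walk u v) :
    (γ.translate hact g).edges = γ.edges.map (Sym2.map (g • ·)) :=
  Walk.edges_map _ _

theorem SimpleGraph.Walk.length_translate (hact : PreservesAdj G Γ) (g : G) (γ : Γ.Walk u v) :
    (γ.translate hact g).length = γ.length :=
  Walk.length_map _ _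

theorem adj_of_mem_edges_map_smul (hact : PreservesAdj G Γ) {γ : Γ.Walk u v} {g : G} {x y : V}
    (h : s(x, y) ∈ γ.edges.map (Sym2.map (g • ·))) : Γ.Adj x y :=
  (γ.translate hact g).adj_of_mem_edges (by rwa [Walk.edges_translate])

theorem OnCommonTranslate.symm {γ : Γ.Walk u v} {a q p : V} :
    OnCommonTranslate G γ a q p → OnCommonTranslate G γ a p q
  | ⟨g, hq, hp⟩ => ⟨g, hp, hq⟩

theorem OnCommonTranslate.adj (hact : PreservesAdj G Γ) {γ : Γ.Walk u v} {a q p : V} :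
    OnCommonTranslate G γ a q p → Γ.Adj a q ∧ Γ.Adj a p
  | ⟨_, hq, hp⟩ => ⟨(adj_of_mem_edges_map_smul hact hq).symm,
      (adj_of_mem_edges_map_smul hact hp).symm⟩

theorem finite_setOf_sym2Map_smul_eq {x y : V}
    (hstab : {g : G | (g • x = x ∧ g • y = y) ∨ (g • x = y ∧ g • y = x)}.Finite) (e : Sym2 V) :
    {g : G | Sym2.map (g • ·) s(x, y) = e}.Finite := by
  rcases Set.eq_empty_or_nonempty {g : G | Sym2.map (g • ·) s(x, y) = e} with hS | ⟨g₀, hg₀⟩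
  · exact hS ▸ Set.finite_empty
  refine (hstab.image (g₀ * ·)).subset fun g hg => ⟨g₀⁻¹ * g, ?_, mul_inv_cancel_left g₀ g⟩
  have : s(g • x, g • y) = s(g₀ • x, g₀ • y) := hg.trans hg₀.symm
  rcases Sym2.eq_iff.1 this with ⟨hx, hy⟩ | ⟨hx, hy⟩
  · exact .inl ⟨by rw [mul_smul, hx, inv_smul_smul], by rw [mul_smul, hy, inv_smul_smul]⟩
  · exact .inr ⟨by rw [mul_smul, hx, inv_smul_smul], by rw [mul_smul, hy, inv_smul_smul]⟩

variable (hedge : FiniteEdgeStabilizers G Γ)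
include hedge

theorem finite_setOf_mem_edges_map_smul (γ : Γ.Walk u v) (e : Sym2 V) :
    {g : G | e ∈ γ.edges.map (Sym2.map (g • ·))}.Finite := by
  have : {g : G | e ∈ γ.edges.map (Sym2.map (g • ·))} =
      ⋃ e' ∈ {e' | e' ∈ γ.edges}, {g : G | Sym2.map (g • ·) e' = e} := by
    ext; simp
  rw [this]
  refine γ.edges.finite_toSet.biUnion fun e' he' => ?_
  induction e' using Sym2.ind with
  | _ x y => exact finite_setOf_sym2Map_smul_eq (hedge x y (γ.adj_of_mem_edges he')) e

theorem finite_setOf_onCommonTranslate (γ : Γ.Walk u v) (a q : V) :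
    {p | OnCommonTranslate G γ a q p}.Finite := by
  refine Set.Finite.subset (s := ⋃ g ∈ {g : G | s(q, a) ∈ γ.edges.map (Sym2.map (g • ·))},
      (fun p => s(p, a)) ⁻¹' {e | e ∈ γ.edges.map (Sym2.map (g • ·))}) ?_ ?_
  · refine (finite_setOf_mem_edges_map_smul hedge γ _).biUnion fun g _ => ?_
    exact (List.finite_toSet _).preimage fun p _ p' _ h => Sym2.congr_left.1 h
  · rintro p ⟨g, hq, hp⟩
    exact Set.mem_biUnion hq hp

theorem finite_translateEnds (γ : Γ.Walk u v) (a q : V) : (translateEnds G γ a q).Finite := by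
  refine Set.Finite.subset (s := ⋃ g ∈ {g : G | s(q, a) ∈ γ.edges.map (Sym2.map (g • ·))},
      {g • u, g • v}) ?_ ?_
  · exact (finite_setOf_mem_edges_map_smul hedge γ _).biUnion fun g _ =>
      (Set.finite_singleton _).insert _
  · rintro y ⟨g, hq, rfl | rfl⟩
    · exact Set.mem_biUnion hq (Set.mem_insert _ _)
    · exact Set.mem_biUnion hq (Set.mem_insert_of_mem _ rfl)

end GroupAction

section AttachOrbit

variable {V G : Type*} [Group G] [MulAction G V] {Γ : SimpleGraph V}

theorem edist_sup_fromRel_onCommonTranslate_smul_le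
    (hact : PreservesAdj G Γ) {u v : V} (γ : Γ.Walk u v) {a : V} {g : G}
    (hu : g • u ≠ a) (hv : g • v ≠ a) :
    (deleteVert Γ a ⊔ fromRel (OnCommonTranslate G γ a)).edist (g • u) (g • v) ≤
      (2 * γ.length + 1 : ℕ) := by
  set Λ := deleteVert Γ a ⊔ fromRel (OnCommonTranslate G γ a)
  set W := γ.translate hact g
  have hW : W.edges = γ.edges.map (Sym2.map (g • ·)) := γ.edges_translate hact g
  have hWlen : W.length = γ.length := γ.length_translate hact g
  by_cases ha : a ∈ W.support
  · obtain ⟨q, hq, huq⟩ := W.exists_mem_edges_edist_deleteVert_le ha hu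
    obtain ⟨p, hp, hvp⟩ := W.reverse.exists_mem_edges_edist_deleteVert_le (by simpa) hv
    rw [Walk.edges_reverse, List.mem_reverse] at hp
    rw [Walk.length_reverse] at hvp
    have hqp : Λ.edist q p ≤ 1 := edist_le_one_iff_adj_or_eq.2 <|
      or_iff_not_imp_right.2 fun hne => .inr ⟨hne, .inl ⟨g, hW ▸ hq, hW ▸ hp⟩⟩
    calc Λ.edist (g • u) (g • v) ≤ Λ.edist (g • u) q + Λ.edist q p + Λ.edist p (g • v) :=
          SimpleGraph.edist_triangle.trans (add_le_add_left SimpleGraph.edist_triangle _)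
      _ ≤ γ.length + 1 + γ.length := by
        rw [← hWlen, SimpleGraph.edist_comm (u := p)]
        gcongr
        · exact (edist_anti le_sup_left).trans huq
        · exact (edist_anti le_sup_left).trans hvp
      _ = (2 * γ.length + 1 : ℕ) := by push_cast; ring
  · calc Λ.edist (g • u) (g • v) ≤ (deleteVert Γ a).edist (g • u) (g • v) := edist_anti le_sup_left
      _ ≤ W.length := W.edist_deleteVert_le_length ha
      _ ≤ (2 * γ.length + 1 : ℕ) := by rw [hWlen]; gcongr; omega

theorem edist_sup_fromRel_onCommonTranslate_le
    (hact : PreservesAdj G Γ) {u v : V} (huv : u ≠ v) (γ : Γ.Walk u v)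
    {a c c' : V} (h : (deleteVert (attachOrbit Γ G u v huv) a).Adj c c') :
    (deleteVert Γ a ⊔ fromRel (OnCommonTranslate G γ a)).edist c c' ≤
      (2 * γ.length + 1 : ℕ) := by
  rcases h with ⟨hcc' | ⟨g, ⟨rfl, rfl⟩ | ⟨rfl, rfl⟩⟩, hc, hc'⟩
  · exact (edist_le_one_iff_adj_or_eq.2 (.inl (Or.inl ⟨hcc', hc, hc'⟩))).trans (by simp)
  · exact edist_sup_fromRel_onCommonTranslate_smul_le hact γ hc hc'
  · rw [SimpleGraph.edist_comm]
    exact edist_sup_fromRel_onCommonTranslate_smul_le hact γ hc' hc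

theorem exists_adj_angle_le_of_adj_attachOrbit
    (hact : PreservesAdj G Γ) {u v : V} (huv : u ≠ v) (γ : Γ.Walk u v)
    {a y : V} (hy : (attachOrbit Γ G u v huv).Adj a y) :
    ∃ q, Γ.Adj a q ∧ angle Γ a y q ≤ γ.length ∧ y ∈ insert q (translateEnds G γ a q) := by
  have hya : y ≠ a := hy.ne.symm
  have key : ∀ (g : G) (W : Γ.Walk y a), W.edges ⊆ γ.edges.map (Sym2.map (g • ·)) →
      W.length = γ.length → (g • u = y ∨ g • v = y) →
      ∃ q, Γ.Adj a q ∧ angle Γ a y q ≤ γ.length ∧ y ∈ insert q (translateEnds G γ a q) := by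
    intro g W hW hWlen hgy
    obtain ⟨q, hq, hyq⟩ := W.exists_mem_edges_edist_deleteVert_le W.end_mem_support hya
    exact ⟨q, (W.adj_of_mem_edges hq).symm, hWlen ▸ hyq, .inr ⟨g, hW hq, hgy⟩⟩
  rcases hy with hy | ⟨g, ⟨rfl, rfl⟩ | ⟨rfl, rfl⟩⟩
  · exact ⟨y, hy, by simp [angle], Set.mem_insert _ _⟩
  · refine key g (γ.translate hact g).reverse (fun e he => ?_)
      (by rw [Walk.length_reverse, Walk.length_translate]) (.inr rfl)
    rwa [Walk.edges_reverse, List.mem_reverse, Walk.edges_translate] at he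
  · exact key g (γ.translate hact g) (fun _ he => by rwa [Walk.edges_translate] at he)
      (γ.length_translate hact g) (.inl rfl)

end AttachOrbit

theorem statement5_general {V G : Type*} [Group G] [MulAction G V] (Γ : SimpleGraph V)
    (hconn : Γ.Connected)
    (hact : ∀ (g : G) (x y : V), Γ.Adj x y → Γ.Adj (g • x) (g • y))
    (hedge : ∀ x y : V, Γ.Adj x y →
      ({g : G | (g • x = x ∧ g • y = y) ∨ (g • x = y ∧ g • y = x)} : Set G).Finite)
    (u v : V) (huv : u ≠ v)
    (a : V) (hfine : FineAt Γ a) :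
    FineAt (attachOrbit Γ G u v huv) a := by
  obtain ⟨γ⟩ := hconn.preconnected u v
  set L := γ.length
  set Λ := deleteVert Γ a ⊔ fromRel (OnCommonTranslate G γ a)
  intro x hx n
  obtain ⟨x₀, hx₀, hxx₀, -⟩ := exists_adj_angle_le_of_adj_attachOrbit hact huv γ hx
  have hball := hfine.finite_setOf_edist_sup_fromRel (fun _ _ => OnCommonTranslate.symm)
    (fun _ _ => OnCommonTranslate.adj hact) (finite_setOf_onCommonTranslate hedge γ a) hx₀
    (L + (2 * L + 1) * n + L)
  refine (hball.biUnion fun q _ => (finite_translateEnds hedge γ a q).insert q).subset ?_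
  rintro y ⟨hy, hxy⟩
  unfold angle at hxy
  obtain ⟨q, hq, hyq, hyq'⟩ := exists_adj_angle_le_of_adj_attachOrbit hact huv γ hy
  obtain ⟨w, hw⟩ := exists_walk_of_edist_ne_top (ne_top_of_le_ne_top (by simp) hxy)
  have hwn : w.length ≤ n := by exact_mod_cast hw ▸ hxy
  refine Set.mem_biUnion ⟨hq, ?_⟩ hyq'
  calc Λ.edist x₀ q ≤ Λ.edist x₀ x + Λ.edist x y + Λ.edist y q :=
        SimpleGraph.edist_triangle.trans (by gcongr; exact SimpleGraph.edist_triangle)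
    _ ≤ L + ((2 * L + 1) * w.length : ℕ) + L := by
      gcongr
      · rw [SimpleGraph.edist_comm]
        exact (edist_anti le_sup_left).trans hxx₀
      · exact w.edist_le_mul_length fun _ _ h => edist_sup_fromRel_onCommonTranslate_le hact huv γ h
      · exact (edist_anti le_sup_left).trans hyq
    _ ≤ (L + (2 * L + 1) * n + L : ℕ) := by push_cast; gcongr

theorem statement5 {V G : Type*} [Group G] [MulAction G V] (Γ : SimpleGraph V)
    (hconn : Γ.Connected)
    (hact : ∀ (g : G) (x y : V), Γ.Adj x y → Γ.Adj (g • x) (g • y))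
    (hedge : ∀ x y : V, Γ.Adj x y →
      ({g : G | (g • x = x ∧ g • y = y) ∨ (g • x = y ∧ g • y = x)} : Set G).Finite)
    (u v : V) (huv : u ≠ v) (henew : ¬ Γ.Adj u v)
    (a : V) (hfine : FineAt Γ a) :
    FineAt (attachOrbit Γ G u v huv) a :=
  statement5_general Γ hconn hact hedge u v huv a hfine
end

section
/- Let Γ be a G-graph, let u, v be distinct vertices of Γ with {u,v} ∉ E(Γ), and let Γ' be the G-graph obtained from Γ by attaching the G-orbit of edges with representative {u,v}. If a is a vertex such that the set T_aΓ of neighbors of a in Γ has finitely many orbits under the stabilizer G_a, then T_aΓ' has finitely many G_a-orbits. -/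
open SimpleGraph
/-! A single orbit of edges adds at most one stabilizer orbit of neighbours of `a` per
orientation: if `g • p = a = h • p`, then `h * g⁻¹` fixes `a` and moves `g • q` to `h • q`. -/

section StabilizerOrbits

variable {V : Type*} (G : Type*) [Group G] [MulAction G V]

def FiniteStabilizerOrbits (a : V) (S : Set V) : Prop :=
  ∃ F : Set V, F.Finite ∧ ∀ w ∈ S, ∃ x ∈ F, ∃ g : G, g • a = a ∧ g • x = w

/-- The far ends of the edges in the `G`-orbit of the directed edge `p → q` that start at `a`. -/
def orbitPartners (a p q : V) : Set V :=
  {w | ∃ g : G, g • p = a ∧ g • q = w}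

variable {G}

theorem FiniteStabilizerOrbits.union {a : V} {S T : Set V}
    (hS : FiniteStabilizerOrbits G a S) (hT : FiniteStabilizerOrbits G a T) :
    FiniteStabilizerOrbits G a (S ∪ T) := by
  obtain ⟨F, hF, hFS⟩ := hS
  obtain ⟨F', hF', hF'T⟩ := hT
  refine ⟨F ∪ F', hF.union hF', ?_⟩
  rintro w (hw | hw)
  · obtain ⟨x, hx, hxw⟩ := hFS w hw
    exact ⟨x, Or.inl hx, hxw⟩
  · obtain ⟨x, hx, hxw⟩ := hF'T w hw
    exact ⟨x, Or.inr hx, hxw⟩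

theorem finiteStabilizerOrbits_of_subset_orbit {a : V} {S : Set V}
    (hS : ∀ w ∈ S, ∀ w' ∈ S, ∃ g : G, g • a = a ∧ g • w = w') :
    FiniteStabilizerOrbits G a S := by
  rcases S.eq_empty_or_nonempty with rfl | ⟨w₀, hw₀⟩
  · exact ⟨∅, Set.finite_empty, by simp⟩
  · exact ⟨{w₀}, Set.finite_singleton w₀, fun w hw => ⟨w₀, rfl, hS w₀ hw₀ w hw⟩⟩

theorem finiteStabilizerOrbits_orbitPartners (a p q : V) :
    FiniteStabilizerOrbits G a (orbitPartners G a p q) := by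
  refine finiteStabilizerOrbits_of_subset_orbit ?_
  rintro _ ⟨g, hgp, rfl⟩ _ ⟨h, hhp, rfl⟩
  refine ⟨h * g⁻¹, ?_, ?_⟩
  · rw [mul_smul, inv_smul_eq_iff.mpr hgp.symm, hhp]
  · rw [mul_smul, inv_smul_smul]

theorem neighborSet_attachOrbit (Γ : SimpleGraph V) {u v : V} (huv : u ≠ v) (a : V) :
    (attachOrbit Γ G u v huv).neighborSet a =
      Γ.neighborSet a ∪ orbitPartners G a u v ∪ orbitPartners G a v u := by
  ext w
  simp only [mem_neighborSet, attachOrbit, orbitPartners, Set.mem_union,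
    Set.mem_ofPred_eq, exists_or, or_assoc]

end StabilizerOrbits

theorem statement8_general {V G : Type*} [Group G] [MulAction G V] (Γ : SimpleGraph V)
    (u v : V) (huv : u ≠ v) (a : V)
    (hfinorb : ∃ F : Set V, F.Finite ∧ ∀ w ∈ Γ.neighborSet a,
        ∃ x ∈ F, ∃ g : G, g • a = a ∧ g • x = w) :
    ∃ F : Set V, F.Finite ∧ ∀ w ∈ (attachOrbit Γ G u v huv).neighborSet a,
        ∃ x ∈ F, ∃ g : G, g • a = a ∧ g • x = w := by
  have hΓ : FiniteStabilizerOrbits G a (Γ.neighborSet a) := hfinorb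
  rw [neighborSet_attachOrbit]
  exact (hΓ.union (finiteStabilizerOrbits_orbitPartners a u v)).union
    (finiteStabilizerOrbits_orbitPartners a v u)

theorem statement8 {V G : Type*} [Group G] [MulAction G V] (Γ : SimpleGraph V)
    (hact : ∀ (g : G) (x y : V), Γ.Adj x y → Γ.Adj (g • x) (g • y))
    (u v : V) (huv : u ≠ v) (henew : ¬ Γ.Adj u v) (a : V)
    (hfinorb : ∃ F : Set V, F.Finite ∧ ∀ w ∈ Γ.neighborSet a,
        ∃ x ∈ F, ∃ g : G, g • a = a ∧ g • x = w) :
    ∃ F : Set V, F.Finite ∧ ∀ w ∈ (attachOrbit Γ G u v huv).neighborSet a,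
        ∃ x ∈ F, ∃ g : G, g • a = a ∧ g • x = w :=
  statement8_general Γ u v huv a hfinorb
end

section
/- Under the standing setup (Γ a connected G-graph with finite edge stabilizers; v_0 a vertex with G_{v_0} = H; u_0, …, u_ℓ vertices with finite G-stabilizers such that every vertex of Γ lies in the G-orbit of v_0 or of some u_i, every edge of Γ has at least one endpoint in the G-orbit of some u_i, {u_0, v_0} ∈ E(Γ), and {u_0, u_j} ∈ E(Γ) for all 1 ≤ j ≤ ℓ; X = {g ∈ G : dist_Γ(u_i, g·u_j) = 1 or dist_Γ(u_i, g·v_0) = 1 for some 0 ≤ i, j ≤ ℓ}; and q the vertex map of Γ̂(G,H,X) given by q(g) = g·u_0 and q(gH) = g·v_0), for all vertices a, b of Γ̂(G,H,X) one has dist_Γ(q(a), q(b)) ≤ 3·dist_{Γ̂(G,H,X)}(a,b). -/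
open SimpleGraph
/-- The coned-off Cayley graph `Γ̂(G,H,X)`: vertices are `G ⊔ G/H`; distinct `g, g'` in `G`
are adjacent iff `g⁻¹g' ∈ (X ∪ X⁻¹) \ {1}`, and `g` is adjacent to the cone vertex `gH`. -/
def conedOff (G : Type*) [Group G] (H : Subgroup G) (X : Set G) :
    SimpleGraph (G ⊕ (G ⧸ H)) where
  Adj a b :=
    match a, b with
    | Sum.inl g, Sum.inl g' => g ≠ g' ∧ (g⁻¹ * g' ∈ X ∨ g'⁻¹ * g ∈ X)
    | Sum.inl g, Sum.inr c => (g : G ⧸ H) = c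
    | Sum.inr c, Sum.inl g => (g : G ⧸ H) = c
    | Sum.inr _, Sum.inr _ => False
  symm := ⟨by
    rintro (g | c) (g' | c') h
    · exact ⟨fun e => h.1 e.symm, h.2.symm⟩
    · exact h
    · exact h
    · exact h⟩
  loopless := ⟨by
    rintro (g | c) h
    · exact h.1 rfl
    · exact h⟩

/-- The Cayley graph of `G` with respect to a set `S`, viewed as a simple graph. -/
def cayley (G : Type*) [Group G] (S : Set G) : SimpleGraph G where
  Adj g g' := g ≠ g' ∧ (g⁻¹ * g' ∈ S ∨ g'⁻¹ * g ∈ S)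
  symm := ⟨fun g g' h => ⟨fun e => h.1 e.symm, h.2.symm⟩⟩
  loopless := ⟨fun g h => h.1 rfl⟩

/-!
Every point of `B = {v₀, u_i}` lies within distance one of `u₀`, so an `s ∈ X`, which joins some
`u_i` to some `s • b` with `b ∈ B`, moves `u₀` by at most `1 + 1 + 1`; a cone edge `g ~ gH` goes to
a translate of the edge `u₀ v₀`. Hence `q` stretches edges by at most `3`, and the bound holds
along every walk of `Γ̂`.

It remains to see that `Γ̂` is connected (otherwise its distance takes the junk value `0`), i.e.
that `X` generates `G`. The `⟨X⟩`-translates of `B` form a set of vertices closed under adjacency: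
an edge at `u_i` is labelled by an element of `X`, and an edge at `v₀` has an endpoint `g • u_i`,
which reduces it to that case. So they cover the connected graph `Γ`, and `s • u₀ ∈ B` forces
`s ∈ X`.
-/

namespace SimpleGraph

variable {V W : Type*} {Γ : SimpleGraph V} {Δ : SimpleGraph W}

lemma dist_le_mul_length_of_adj (hΔ : Δ.Connected) (f : V → W) (C : ℕ)
    (hf : ∀ a b, Γ.Adj a b → Δ.dist (f a) (f b) ≤ C) {a b : V} (p : Γ.Walk a b) :
    Δ.dist (f a) (f b) ≤ C * p.length := by
  induction p with
  | nil => simp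
  | cons h p ih =>
    rw [Walk.length_cons, mul_add_one, add_comm]
    exact hΔ.dist_triangle.trans (Nat.add_le_add (hf _ _ h) ih)

lemma Reachable.dist_le_mul_dist_of_adj (hΔ : Δ.Connected) (f : V → W) (C : ℕ)
    (hf : ∀ a b, Γ.Adj a b → Δ.dist (f a) (f b) ≤ C) {a b : V} (h : Γ.Reachable a b) :
    Δ.dist (f a) (f b) ≤ C * Γ.dist a b := by
  obtain ⟨p, hp⟩ := h.exists_walk_length_eq_dist
  rw [← hp]
  exact dist_le_mul_length_of_adj hΔ f C hf p

lemma Reachable.mem_of_adj_closed {S : Set V} (hS : ∀ x y, x ∈ S → Γ.Adj x y → y ∈ S)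
    {a b : V} (h : Γ.Reachable a b) (ha : a ∈ S) : b ∈ S := by
  obtain ⟨p⟩ := h
  induction p with
  | nil => exact ha
  | cons hxy _ ih => exact ih (hS _ _ ha hxy)

section Action

variable {V G : Type*} [Group G] [MulAction G V] {Γ : SimpleGraph V}

lemma dist_smul_le (hact : ∀ (g : G) (x y : V), Γ.Adj x y → Γ.Adj (g • x) (g • y))
    (hconn : Γ.Connected) (g : G) (x y : V) : Γ.dist (g • x) (g • y) ≤ Γ.dist x y := by
  simpa using (hconn x y).dist_le_mul_dist_of_adj hconn (g • ·) 1
    fun a b h => (dist_eq_one_iff_adj.2 (hact g a b h)).le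

lemma exists_inv_smul_mem_of_adj
    (hact : ∀ (g : G) (x y : V), Γ.Adj x y → Γ.Adj (g • x) (g • y)) (hconn : Γ.Preconnected)
    (K : Subgroup G) {B : Set V} {b₀ : V} (hb₀ : b₀ ∈ B)
    (hB : ∀ b ∈ B, ∀ y, Γ.Adj b y → ∃ k ∈ K, k⁻¹ • y ∈ B) (x : V) :
    ∃ k ∈ K, k⁻¹ • x ∈ B := by
  refine (hconn b₀ x).mem_of_adj_closed (S := {x | ∃ k ∈ K, k⁻¹ • x ∈ B}) ?_
    ⟨1, one_mem K, by simpa using hb₀⟩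
  rintro x y ⟨k, hk, hx⟩ hxy
  obtain ⟨k', hk', hy⟩ := hB _ hx _ (hact k⁻¹ x y hxy)
  exact ⟨k * k', mul_mem hk hk', by rwa [mul_inv_rev, mul_smul]⟩

end Action

end SimpleGraph

section OrbitRepresentatives

open SimpleGraph

variable {V G : Type*} [Group G] [MulAction G V] {Γ : SimpleGraph V}
  {ι : Type*} {u : ι → V} {v0 : V} {X : Set G}

lemma dist_apply_zero_le_one [Zero ι] (h0 : Γ.Adj (u 0) v0)
    (hj : ∀ j, j ≠ 0 → Γ.Adj (u 0) (u j)) {b : V} (hb : b ∈ insert v0 (Set.range u)) :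
    Γ.dist (u 0) b ≤ 1 := by
  obtain rfl | ⟨j, rfl⟩ := hb
  · exact (dist_eq_one_iff_adj.2 h0).le
  · obtain rfl | hj0 := eq_or_ne j 0
    · simp
    · exact (dist_eq_one_iff_adj.2 (hj j hj0)).le

lemma dist_apply_zero_smul_le_three [Zero ι]
    (hact : ∀ (g : G) (x y : V), Γ.Adj x y → Γ.Adj (g • x) (g • y))
    (hconn : Γ.Connected) (h0 : Γ.Adj (u 0) v0) (hj : ∀ j, j ≠ 0 → Γ.Adj (u 0) (u j))
    {s : G} {i : ι} {b : V} (hb : b ∈ insert v0 (Set.range u)) (hs : Γ.Adj (u i) (s • b)) :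
    Γ.dist (u 0) (s • u 0) ≤ 3 := by
  have hi := dist_apply_zero_le_one h0 hj (Set.mem_insert_of_mem v0 (Set.mem_range_self i))
  have hb' : Γ.dist (s • b) (s • u 0) ≤ 1 := by
    rw [dist_comm]
    exact (dist_smul_le hact hconn s _ _).trans (dist_apply_zero_le_one h0 hj hb)
  calc Γ.dist (u 0) (s • u 0)
      ≤ Γ.dist (u 0) (u i) + (Γ.dist (u i) (s • b) + Γ.dist (s • b) (s • u 0)) :=
        hconn.dist_triangle.trans (Nat.add_le_add_left hconn.dist_triangle _)
    _ ≤ 1 + (1 + 1) := by rw [dist_eq_one_iff_adj.2 hs]; omega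

lemma exists_inv_smul_mem_of_adj_u
    (hvert : ∀ x : V, (∃ g : G, g • v0 = x) ∨ ∃ g : G, ∃ i, g • u i = x)
    (hX : ∀ s i, ∀ b ∈ insert v0 (Set.range u), Γ.Adj (u i) (s • b) → s ∈ X)
    {i : ι} {y : V} (hy : Γ.Adj (u i) y) :
    ∃ k ∈ Subgroup.closure X, k⁻¹ • y ∈ insert v0 (Set.range u) := by
  obtain ⟨b, hb, g, rfl⟩ : ∃ b ∈ insert v0 (Set.range u), ∃ g : G, g • b = y := by
    rcases hvert y with ⟨g, hg⟩ | ⟨g, j, hg⟩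
    · exact ⟨v0, Set.mem_insert _ _, g, hg⟩
    · exact ⟨u j, Set.mem_insert_of_mem _ (Set.mem_range_self j), g, hg⟩
  exact ⟨g, Subgroup.subset_closure (hX g i b hb hy), by simpa using hb⟩

lemma exists_inv_smul_mem_of_adj_v0 [Zero ι]
    (hact : ∀ (g : G) (x y : V), Γ.Adj x y → Γ.Adj (g • x) (g • y))
    (hvert : ∀ x : V, (∃ g : G, g • v0 = x) ∨ ∃ g : G, ∃ i, g • u i = x)
    (hedgecover : ∀ x y : V, Γ.Adj x y →
      (∃ g : G, ∃ i, g • u i = x) ∨ (∃ g : G, ∃ i, g • u i = y))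
    (h0 : Γ.Adj (u 0) v0)
    (hX : ∀ s i, ∀ b ∈ insert v0 (Set.range u), Γ.Adj (u i) (s • b) → s ∈ X)
    {y : V} (hy : Γ.Adj v0 y) :
    ∃ k ∈ Subgroup.closure X, k⁻¹ • y ∈ insert v0 (Set.range u) := by
  rcases hedgecover v0 y hy with ⟨g, i, rfl⟩ | ⟨g, i, rfl⟩
  · have hg : g ∈ X := hX g 0 (u i) (Set.mem_insert_of_mem _ (Set.mem_range_self i)) h0
    obtain ⟨k, hk, hky⟩ := exists_inv_smul_mem_of_adj_u hvert hX
      (i := i) (y := g⁻¹ • y) (by simpa using hact g⁻¹ _ _ hy)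
    exact ⟨g * k, mul_mem (Subgroup.subset_closure hg) hk, by rwa [mul_inv_rev, mul_smul]⟩
  · have hg : g⁻¹ ∈ X :=
      hX g⁻¹ i v0 (Set.mem_insert _ _) (by simpa using hact g⁻¹ _ _ hy.symm)
    refine ⟨g, by simpa using Subgroup.subset_closure hg, ?_⟩
    simp only [inv_smul_smul]
    exact Set.mem_insert_of_mem v0 (Set.mem_range_self i)

lemma mem_of_smul_zero_mem [Zero ι]
    (hact : ∀ (g : G) (x y : V), Γ.Adj x y → Γ.Adj (g • x) (g • y))
    (h0 : Γ.Adj (u 0) v0) (hj : ∀ j, j ≠ 0 → Γ.Adj (u 0) (u j))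
    (hX : ∀ s i, ∀ b ∈ insert v0 (Set.range u), Γ.Adj (u i) (s • b) → s ∈ X)
    {s : G} (hs : s • u 0 ∈ insert v0 (Set.range u)) : s ∈ X := by
  have hu0 : u 0 ∈ insert v0 (Set.range u) := Set.mem_insert_of_mem _ (Set.mem_range_self 0)
  obtain hsv | ⟨j, hsj⟩ := hs
  · exact hX s 0 (u 0) hu0 (hsv ▸ h0)
  · obtain rfl | hj0 := eq_or_ne j 0
    · refine hX s 0 v0 (Set.mem_insert _ _) ?_
      rw [hsj]
      exact hact s _ _ h0
    · exact hX s 0 (u 0) hu0 (hsj ▸ hj j hj0)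

lemma closure_eq_top_of_adj_mem [Zero ι]
    (hact : ∀ (g : G) (x y : V), Γ.Adj x y → Γ.Adj (g • x) (g • y))
    (hconn : Γ.Preconnected)
    (hvert : ∀ x : V, (∃ g : G, g • v0 = x) ∨ ∃ g : G, ∃ i, g • u i = x)
    (hedgecover : ∀ x y : V, Γ.Adj x y →
      (∃ g : G, ∃ i, g • u i = x) ∨ (∃ g : G, ∃ i, g • u i = y))
    (h0 : Γ.Adj (u 0) v0) (hj : ∀ j, j ≠ 0 → Γ.Adj (u 0) (u j))
    (hX : ∀ s i, ∀ b ∈ insert v0 (Set.range u), Γ.Adj (u i) (s • b) → s ∈ X) :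
    Subgroup.closure X = ⊤ := by
  have hB : ∀ b ∈ insert v0 (Set.range u), ∀ y, Γ.Adj b y →
      ∃ k ∈ Subgroup.closure X, k⁻¹ • y ∈ insert v0 (Set.range u) := by
    rintro b (rfl | ⟨i, rfl⟩) y hy
    · exact exists_inv_smul_mem_of_adj_v0 hact hvert hedgecover h0 hX hy
    · exact exists_inv_smul_mem_of_adj_u hvert hX hy
  refine eq_top_iff.2 fun g _ => ?_
  obtain ⟨k, hk, hkg⟩ :=
    exists_inv_smul_mem_of_adj hact hconn _ (Set.mem_insert v0 _) hB (g • u 0)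
  rw [← smul_assoc, smul_eq_mul] at hkg
  simpa using mul_mem hk (Subgroup.subset_closure (mem_of_smul_zero_mem hact h0 hj hX hkg))

end OrbitRepresentatives

section ConedOff

variable {G : Type*} [Group G] {H : Subgroup G} {X : Set G}

lemma conedOff_adj_inl_mul (g : G) {s : G} (hs : s ∈ X) (hne : s ≠ 1) :
    (conedOff G H X).Adj (Sum.inl g) (Sum.inl (g * s)) :=
  ⟨by simpa using hne, Or.inl (by simpa using hs)⟩

lemma conedOff_reachable_of_mem_closure {g : G} (hg : g ∈ Subgroup.closure X) :
    (conedOff G H X).Reachable (Sum.inl 1) (Sum.inl g) := by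
  induction hg using Subgroup.closure_induction_right with
  | one => rfl
  | mul_right x _ s hs ih =>
    refine ih.trans ?_
    obtain rfl | hne := eq_or_ne s 1
    · simp
    · exact (conedOff_adj_inl_mul x hs hne).reachable
  | mul_inv_cancel x _ s hs ih =>
    refine ih.trans ?_
    obtain rfl | hne := eq_or_ne s 1
    · simp
    · simpa using (conedOff_adj_inl_mul (x * s⁻¹) hs hne).reachable.symm

lemma conedOff_preconnected (hX : Subgroup.closure X = ⊤) : (conedOff G H X).Preconnected := by
  have h1 : ∀ z, (conedOff G H X).Reachable (Sum.inl 1) z := by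
    rintro (g | c)
    · exact conedOff_reachable_of_mem_closure (hX ▸ Subgroup.mem_top g)
    · obtain ⟨g, rfl⟩ := QuotientGroup.mk_surjective c
      exact (conedOff_reachable_of_mem_closure (hX ▸ Subgroup.mem_top g)).trans
        (SimpleGraph.Adj.reachable rfl)
  exact fun a b => (h1 a).symm.trans (h1 b)

lemma dist_le_of_conedOff_adj {V : Type*} [MulAction G V] {Γ : SimpleGraph V}
    (hact : ∀ (g : G) (x y : V), Γ.Adj x y → Γ.Adj (g • x) (g • y)) (hconn : Γ.Connected)
    {x₀ y₀ : V} {C : ℕ} (hX : ∀ s ∈ X, Γ.dist x₀ (s • x₀) ≤ C) (hxy : Γ.dist x₀ y₀ ≤ C)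
    {q : G ⊕ (G ⧸ H) → V} (hq1 : ∀ g : G, q (Sum.inl g) = g • x₀)
    (hq2 : ∀ g : G, q (Sum.inr (QuotientGroup.mk g)) = g • y₀)
    {a b : G ⊕ (G ⧸ H)} (hab : (conedOff G H X).Adj a b) : Γ.dist (q a) (q b) ≤ C := by
  have hmul (g s : G) (hs : s ∈ X) : Γ.dist (g • x₀) ((g * s) • x₀) ≤ C := by
    rw [mul_smul]
    exact (SimpleGraph.dist_smul_le hact hconn g _ _).trans (hX s hs)
  have hcone (g : G) : Γ.dist (g • x₀) (g • y₀) ≤ C :=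
    (SimpleGraph.dist_smul_le hact hconn g _ _).trans hxy
  rcases a with g | c <;> rcases b with g' | c'
  · rw [hq1, hq1]
    rcases hab.2 with hs | hs
    · simpa using hmul g _ hs
    · rw [SimpleGraph.dist_comm]
      simpa using hmul g' _ hs
  · obtain rfl : (g : G ⧸ H) = c' := hab
    rw [hq1, hq2]
    exact hcone g
  · obtain rfl : (g' : G ⧸ H) = c := hab
    rw [hq1, hq2, SimpleGraph.dist_comm]
    exact hcone g'
  · exact hab.elim

end ConedOff

theorem statement14_general {V G : Type*} [Group G] [MulAction G V] (Γ : SimpleGraph V)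
    (hconn : Γ.Connected)
    (hact : ∀ (g : G) (x y : V), Γ.Adj x y → Γ.Adj (g • x) (g • y))
    (H : Subgroup G) (v0 : V)
    (ℓ : ℕ) (u : Fin (ℓ + 1) → V)
    (hvert : ∀ x : V, (∃ g : G, g • v0 = x) ∨ ∃ g : G, ∃ i, g • u i = x)
    (hedgecover : ∀ x y : V, Γ.Adj x y →
      (∃ g : G, ∃ i, g • u i = x) ∨ (∃ g : G, ∃ i, g • u i = y))
    (h0 : Γ.Adj (u 0) v0)
    (hj : ∀ j : Fin (ℓ + 1), j ≠ 0 → Γ.Adj (u 0) (u j))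
    (X : Set G)
    (hX : X = {g : G | ∃ i j, Γ.dist (u i) (g • u j) = 1 ∨ Γ.dist (u i) (g • v0) = 1})
    (q : (G ⊕ (G ⧸ H)) → V)
    (hq1 : ∀ g : G, q (Sum.inl g) = g • u 0)
    (hq2 : ∀ g : G, q (Sum.inr (QuotientGroup.mk g)) = g • v0) :
    ∀ a b : G ⊕ (G ⧸ H),
      Γ.dist (q a) (q b) ≤ 3 * (conedOff G H X).dist a b := by
  have hXiff (s : G) :
      s ∈ X ↔ ∃ i, ∃ b ∈ insert v0 (Set.range u), Γ.Adj (u i) (s • b) := by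
    simp only [hX, Set.mem_ofPred_eq, dist_eq_one_iff_adj, Set.exists_mem_insert,
      Set.exists_range_iff]
    exact ⟨fun ⟨i, j, h⟩ => ⟨i, h.symm.imp_right (⟨j, ·⟩)⟩,
      fun ⟨i, h⟩ => h.elim (fun h => ⟨i, i, .inr h⟩) fun ⟨j, h⟩ => ⟨i, j, .inl h⟩⟩
  have hgen : Subgroup.closure X = ⊤ :=
    closure_eq_top_of_adj_mem hact hconn.preconnected hvert hedgecover h0 hj
      fun s i b hb h => (hXiff s).2 ⟨i, b, hb, h⟩
  have hedge3 (a b : G ⊕ (G ⧸ H)) (hab : (conedOff G H X).Adj a b) :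
      Γ.dist (q a) (q b) ≤ 3 := by
    refine dist_le_of_conedOff_adj hact hconn (fun s hs => ?_)
      (by rw [dist_eq_one_iff_adj.2 h0]; omega) hq1 hq2 hab
    obtain ⟨i, b, hb, h⟩ := (hXiff s).1 hs
    exact dist_apply_zero_smul_le_three hact hconn h0 hj hb h
  exact fun a b =>
    (conedOff_preconnected hgen a b).dist_le_mul_dist_of_adj hconn q 3 hedge3

theorem statement14 {V G : Type*} [Group G] [MulAction G V] (Γ : SimpleGraph V)
    (hconn : Γ.Connected)
    (hact : ∀ (g : G) (x y : V), Γ.Adj x y → Γ.Adj (g • x) (g • y))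
    (hedge : ∀ x y : V, Γ.Adj x y →
      ({g : G | (g • x = x ∧ g • y = y) ∨ (g • x = y ∧ g • y = x)} : Set G).Finite)
    (H : Subgroup G) (v0 : V) (hv0 : MulAction.stabilizer G v0 = H)
    (ℓ : ℕ) (u : Fin (ℓ + 1) → V)
    (hufin : ∀ i, ({g : G | g • u i = u i} : Set G).Finite)
    (hvert : ∀ x : V, (∃ g : G, g • v0 = x) ∨ ∃ g : G, ∃ i, g • u i = x)
    (hedgecover : ∀ x y : V, Γ.Adj x y →
      (∃ g : G, ∃ i, g • u i = x) ∨ (∃ g : G, ∃ i, g • u i = y))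
    (h0 : Γ.Adj (u 0) v0)
    (hj : ∀ j : Fin (ℓ + 1), j ≠ 0 → Γ.Adj (u 0) (u j))
    (X : Set G)
    (hX : X = {g : G | ∃ i j, Γ.dist (u i) (g • u j) = 1 ∨ Γ.dist (u i) (g • v0) = 1})
    (q : (G ⊕ (G ⧸ H)) → V)
    (hq1 : ∀ g : G, q (Sum.inl g) = g • u 0)
    (hq2 : ∀ g : G, q (Sum.inr (QuotientGroup.mk g)) = g • v0) :
    ∀ a b : G ⊕ (G ⧸ H),
      Γ.dist (q a) (q b) ≤ 3 * (conedOff G H X).dist a b :=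
  statement14_general Γ hconn hact H v0 ℓ u hvert hedgecover h0 hj X hX q hq1 hq2
end
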